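/- arXiv:2205.01141 — 3 statements merged into one kernel-verified Lean document; each statement's English description precedes it below -/
import Mathlib

section
/- Let $y: [0,\infty) \to (0,\infty)$ be differentiable and satisfy $y'(t) \leq \lambda_1 y(t) + |b|\, y(t)^M$ with $\lambda_1 < 0$, $M \geq 2$ an integer, and $|b|\, y(0)^{M-1} + \lambda_1 \leq 0$. Then $y(t) \leq y(0)$ for all $t \geq 0$. -/
/-- Bernoulli-type differential inequality: if `y : [0,∞) → (0,∞)` is differentiable
with `y' ≤ λ₁ y + |b| y^M`, `λ₁ < 0`, `M ≥ 2`, and `|b| y(0)^{M-1} + λ₁ ≤ 0`, then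
`y(t) ≤ y(0)` for all `t ≥ 0`. -/
theorem stmt_9 (y : ℝ → ℝ) (lam1 b : ℝ) (M : ℕ)
    (hpos : ∀ t, 0 ≤ t → 0 < y t)
    (hdiff : ∀ t, 0 ≤ t → DifferentiableAt ℝ y t)
    (hineq : ∀ t, 0 ≤ t → deriv y t ≤ lam1 * y t + |b| * y t ^ M)
    (hlam : lam1 < 0) (hM : 2 ≤ M)
    (h0 : |b| * y 0 ^ (M - 1) + lam1 ≤ 0) :
    ∀ t, 0 ≤ t → y t ≤ y 0 := by
  intro t ht
  set n := M - 1 with hn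
  have hn1 : 1 ≤ n := by omega
  have hlam' : (0:ℝ) < -lam1 := by linarith
  set k : ℝ := (n:ℝ) * (-lam1) with hk
  have hnpos : (0:ℝ) < (n:ℝ) := by exact_mod_cast Nat.pos_of_ne_zero (by omega)
  have hkpos : 0 < k := mul_pos hnpos hlam'
  set A : ℝ := |b| / (-lam1) with hA
  set g : ℝ → ℝ := fun s => Real.exp (-k * s) * ((y s ^ n)⁻¹ - A) with hg
  have hgd : ∀ s, 0 ≤ s → HasDerivAt g
      (Real.exp (-k * s) * (-k) * ((y s ^ n)⁻¹ - A)
        + Real.exp (-k * s) * (-((n:ℝ) * y s ^ (n-1) * deriv y s) / (y s ^ n)^2)) s := by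
    intro s hs
    have hy : HasDerivAt y (deriv y s) s := (hdiff s hs).hasDerivAt
    have hyp : HasDerivAt (fun u => y u ^ n) ((n:ℝ) * y s ^ (n-1) * deriv y s) s := hy.pow n
    have hyi : HasDerivAt (fun u => (y u ^ n)⁻¹)
        (-((n:ℝ) * y s ^ (n-1) * deriv y s) / (y s ^ n)^2) s :=
      hyp.inv (pow_ne_zero _ (hpos s hs).ne')
    have hexp : HasDerivAt (fun u => Real.exp (-k * u)) (Real.exp (-k * s) * (-k)) s := by
      have := ((hasDerivAt_id s).const_mul (-k)).exp
      simpa [mul_comm] using this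
    have := hexp.mul (hyi.sub_const A)
    convert this using 1
    all_goals rfl
  have hder_nonneg : ∀ s, 0 ≤ s →
      0 ≤ Real.exp (-k * s) * (-k) * ((y s ^ n)⁻¹ - A)
        + Real.exp (-k * s) * (-((n:ℝ) * y s ^ (n-1) * deriv y s) / (y s ^ n)^2) := by
    intro s hs
    have hc : 0 < y s := hpos s hs
    have hq : 0 < y s ^ (n-1) := pow_pos hc _
    have hcn : y s ^ n = y s ^ (n-1) * y s := by
      rw [← pow_succ]; congr 1; omega
    have hcM : y s ^ M = y s ^ (n-1) * y s * y s := by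
      rw [← pow_succ, ← pow_succ]; congr 1; omega
    have hd := hineq s hs
    rw [hcM] at hd
    set c := y s with hc'
    set q := c ^ (n-1) with hq'
    set d := deriv y s with hd'
    have hE : 0 < Real.exp (-k * s) := Real.exp_pos _
    have hbracket : 0 ≤ (-k) * ((q * c)⁻¹ - A) + -((n:ℝ) * q * d) / (q * c)^2 := by
      have hqc : (0:ℝ) < q * c := mul_pos hq hc
      have hkA : k * A = (n:ℝ) * |b| := by
        rw [hk, hA]; field_simp [hlam.ne]
      have key : 0 ≤ ((-k) * ((q * c)⁻¹ - A) + -((n:ℝ) * q * d) / (q * c)^2) * (q * c)^2 := by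
        have expand : ((-k) * ((q * c)⁻¹ - A) + -((n:ℝ) * q * d) / (q * c)^2) * (q * c)^2
            = -k * (q * c) + (k * A) * (q * c)^2 - (n:ℝ) * q * d := by
          field_simp
          ring
        rw [expand, hkA, hk]
        have h1 : (n:ℝ) * q * d ≤ (n:ℝ) * q * (lam1 * c + |b| * (q * c * c)) :=
          mul_le_mul_of_nonneg_left hd (by positivity)
        nlinarith [h1]
      rw [mul_comm] at key
      exact nonneg_of_mul_nonneg_right key (pow_pos hqc 2)
    have : Real.exp (-k * s) * (-k) * ((q * c)⁻¹ - A)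
        + Real.exp (-k * s) * (-((n:ℝ) * q * d) / (q * c)^2)
        = Real.exp (-k * s) * ((-k) * ((q * c)⁻¹ - A) + -((n:ℝ) * q * d) / (q * c)^2) := by
      ring
    rw [hcn, this]
    exact mul_nonneg hE.le hbracket
  have hcont : ContinuousOn g (Set.Ici 0) := fun s hs =>
    ((hgd s hs).continuousAt).continuousWithinAt
  have hdiffOn : DifferentiableOn ℝ g (interior (Set.Ici (0:ℝ))) := by
    rw [interior_Ici]
    exact fun s hs => ((hgd s (le_of_lt hs)).differentiableAt).differentiableWithinAt
  have hderiv : ∀ x ∈ interior (Set.Ici (0:ℝ)), 0 ≤ deriv g x := by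
    rw [interior_Ici]
    intro x hx
    rw [(hgd x (le_of_lt hx)).deriv]
    exact hder_nonneg x (le_of_lt hx)
  have hmono : MonotoneOn g (Set.Ici 0) :=
    monotoneOn_of_deriv_nonneg (convex_Ici 0) hcont hdiffOn hderiv
  have hgt : g 0 ≤ g t := hmono (Set.self_mem_Ici) ht ht
  have hy0n : (0:ℝ) < y 0 ^ n := pow_pos (hpos 0 le_rfl) n
  have hytn : (0:ℝ) < y t ^ n := pow_pos (hpos t ht) n
  have hg0 : 0 ≤ (y 0 ^ n)⁻¹ - A := by
    have h1 : |b| * y 0 ^ n ≤ -lam1 := by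
      have : y 0 ^ (M - 1) = y 0 ^ n := by rw [hn]
      linarith [h0]
    have h2 : (y 0 ^ n) * (y 0 ^ n)⁻¹ = 1 := mul_inv_cancel₀ hy0n.ne'
    rw [sub_nonneg, hA, div_le_iff₀ hlam']
    nlinarith [mul_le_mul_of_nonneg_right h1 (inv_nonneg.mpr hy0n.le)]
  have hg0eq : g 0 = (y 0 ^ n)⁻¹ - A := by
    simp [hg]
  have hE1 : Real.exp (-k * t) ≤ 1 := by
    rw [Real.exp_le_one_iff]
    nlinarith
  have hEpos : 0 < Real.exp (-k * t) := Real.exp_pos _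
  -- from g 0 ≤ g t, deduce (y 0 ^ n)⁻¹ ≤ (y t ^ n)⁻¹
  have hwA : 0 ≤ (y t ^ n)⁻¹ - A := by
    by_contra h
    push_neg at h
    have : g t < 0 := mul_neg_of_pos_of_neg hEpos h
    rw [hg0eq] at hgt
    linarith
  have hw : (y 0 ^ n)⁻¹ ≤ (y t ^ n)⁻¹ := by
    have : Real.exp (-k * t) * ((y t ^ n)⁻¹ - A) ≤ (y t ^ n)⁻¹ - A := by
      nlinarith
    rw [hg0eq] at hgt
    have hgteq : g t = Real.exp (-k * t) * ((y t ^ n)⁻¹ - A) := rfl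
    rw [hgteq] at hgt
    linarith
  have hpow : y t ^ n ≤ y 0 ^ n := by
    rwa [inv_le_inv₀ hy0n hytn] at hw
  exact (pow_le_pow_iff_left₀ (hpos t ht).le (hpos 0 le_rfl).le (by omega)).mp hpow
end

section
/- Let $U: [0,\infty) \to \mathbb{R}^{n_d}$ solve $U' = (D\Delta_h + aI)U + b\,U^{.M}$ (entrywise $M$-th power), where the largest eigenvalue $\lambda_1$ of the symmetric matrix $D\Delta_h + aI$ is negative, and suppose $\|U(t)\|_\infty \leq \gamma$ for all $t \geq 0$. Then $\|U(t)\|_2 \leq e^{(\lambda_1 + |b|\gamma^{M-1})t}\,\|U(0)\|_2$ for all $t \geq 0$. -/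
open Real

lemma rayleigh_aux {n : ℕ} (A : Matrix (Fin n) (Fin n) ℝ) (hA : A.IsHermitian) (lam : ℝ)
    (h : ∀ i, hA.eigenvalues i ≤ lam) (x : Fin n → ℝ) :
    dotProduct x (A.mulVec x) ≤ lam * dotProduct x x := by
  classical
  set V : Matrix (Fin n) (Fin n) ℝ := (hA.eigenvectorUnitary : Matrix (Fin n) (Fin n) ℝ) with hV
  have hVU : V * (star V) = 1 :=
    Matrix.mem_unitaryGroup_iff.mp hA.eigenvectorUnitary.2
  have hB : (lam • (1 : Matrix (Fin n) (Fin n) ℝ) - A).PosSemidef := by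
    have hd : (Matrix.diagonal (fun i => lam - hA.eigenvalues i)).PosSemidef :=
      Matrix.posSemidef_diagonal_iff.mpr fun i => sub_nonneg.mpr (h i)
    have hps := by simpa [Matrix.star_eq_conjTranspose] using hd.mul_mul_conjTranspose_same V
    have hexp : lam • (1 : Matrix (Fin n) (Fin n) ℝ) - A
        = V * Matrix.diagonal (fun i => lam - hA.eigenvalues i) * (star V) := by
      have hdiag : Matrix.diagonal (fun i => lam - hA.eigenvalues i)
          = lam • (1 : Matrix (Fin n) (Fin n) ℝ) - Matrix.diagonal (RCLike.ofReal ∘ hA.eigenvalues) := by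
        ext i j
        by_cases hij : i = j <;> simp [Matrix.diagonal, hij, Matrix.one_apply]
      rw [hdiag, Matrix.mul_sub, Matrix.sub_mul]
      congr 1
      · rw [Matrix.mul_smul, mul_one, Matrix.smul_mul, hVU]
      · rw [hV]; exact hA.spectral_theorem
    rw [hexp]; exact hps
  have h0 := hB.dotProduct_mulVec_nonneg x
  simp only [RCLike.re_to_real, Matrix.sub_mulVec, Matrix.smul_mulVec,
    Matrix.one_mulVec, dotProduct_sub, dotProduct_smul, star_trivial,
    smul_eq_mul] at h0
  linarith

/-- ℓ² a priori estimate: if `U' = (DΔ_h + aI)U + b U^{.M}` (entrywise `M`-th power),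
the largest eigenvalue `λ₁` of the symmetric matrix `DΔ_h + aI` is negative, and
`‖U(t)‖_∞ ≤ γ` for all `t ≥ 0`, then
`‖U(t)‖₂ ≤ e^{(λ₁ + |b| γ^{M-1}) t} ‖U(0)‖₂` for all `t ≥ 0`. -/
theorem stmt_10 (nd : ℕ) (Δ : Matrix (Fin nd) (Fin nd) ℝ) (Dc a b γ lam1 : ℝ) (M : ℕ)
    (hM : 2 ≤ M) (hD : 0 < Dc)
    (hA : (Dc • Δ + a • (1 : Matrix (Fin nd) (Fin nd) ℝ)).IsHermitian)
    (hgreat : IsGreatest (Set.range hA.eigenvalues) lam1)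
    (hneg : lam1 < 0)
    (U : ℝ → Fin nd → ℝ)
    (hU : ∀ t : ℝ, 0 ≤ t → ∀ j : Fin nd,
      HasDerivAt (fun s => U s j)
        (((Dc • Δ + a • (1 : Matrix (Fin nd) (Fin nd) ℝ)).mulVec (U t)
            + b • fun i => U t i ^ M) j) t)
    (hinf : ∀ t : ℝ, 0 ≤ t → ∀ j : Fin nd, |U t j| ≤ γ) :
    ∀ t : ℝ, 0 ≤ t →
      Real.sqrt (∑ j, U t j ^ 2) ≤
        Real.exp ((lam1 + |b| * γ ^ (M - 1)) * t) * Real.sqrt (∑ j, U 0 j ^ 2) := by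
  set A : Matrix (Fin nd) (Fin nd) ℝ := Dc • Δ + a • (1 : Matrix (Fin nd) (Fin nd) ℝ) with hAdef
  set c : ℝ := lam1 + |b| * γ ^ (M - 1) with hc
  set m : ℕ := M - 1 with hm
  have hMm : M = m + 1 := by omega
  set f : ℝ → ℝ := fun t => ∑ j, U t j ^ 2 with hf
  set F : ℝ → ℝ := fun t => ∑ j,
      ((2 : ℕ) : ℝ) * U t j ^ (2 - 1) * ((A.mulVec (U t) + b • fun i => U t i ^ M) j) with hF
  have hf' : ∀ t : ℝ, 0 ≤ t → HasDerivAt f (F t) t := by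
    intro t ht
    exact HasDerivAt.fun_sum fun j _ => (hU t ht j).fun_pow 2
  have hfnn : ∀ t, 0 ≤ f t := fun t => Finset.sum_nonneg fun j _ => sq_nonneg _
  have hkey : ∀ t : ℝ, 0 ≤ t → F t ≤ 2 * c * f t := by
    intro t ht
    have hsplit : F t = (∑ j, 2 * (U t j * (A.mulVec (U t)) j))
        + ∑ j, 2 * (U t j * (b * U t j ^ M)) := by
      rw [hF, ← Finset.sum_add_distrib]
      refine Finset.sum_congr rfl fun j _ => ?_
      simp only [Pi.add_apply, Pi.smul_apply, smul_eq_mul]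
      push_cast
      ring
    have h1 : (∑ j, 2 * (U t j * (A.mulVec (U t)) j)) ≤ 2 * lam1 * f t := by
      have hr := rayleigh_aux A hA lam1 (fun i => hgreat.2 ⟨i, rfl⟩) (U t)
      have hdp : dotProduct (U t) (U t) = f t := by
        simp [dotProduct, hf, sq]
      have hdp2 : (∑ j, 2 * (U t j * (A.mulVec (U t)) j))
          = 2 * dotProduct (U t) (A.mulVec (U t)) := by
        simp [dotProduct, Finset.mul_sum]
      rw [hdp2]
      rw [hdp] at hr
      linarith
    have h2 : (∑ j, 2 * (U t j * (b * U t j ^ M)))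
        ≤ ∑ j, 2 * (|b| * γ ^ m * U t j ^ 2) := by
      refine Finset.sum_le_sum fun j _ => ?_
      have habs : U t j * (b * U t j ^ M) ≤ |b| * γ ^ m * U t j ^ 2 := by
        calc U t j * (b * U t j ^ M) ≤ |U t j * (b * U t j ^ M)| := le_abs_self _
          _ = |b| * (|U t j| ^ m * U t j ^ 2) := by
              rw [abs_mul, abs_mul, abs_pow, hMm]
              rw [show |U t j| * (|b| * |U t j| ^ (m + 1)) = |b| * (|U t j| ^ m * (|U t j| * |U t j|)) from by ring]
              rw [← sq_abs]
              ring
          _ ≤ |b| * (γ ^ m * U t j ^ 2) := by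
              have hpow : |U t j| ^ m ≤ γ ^ m :=
                pow_le_pow_left₀ (abs_nonneg _) (hinf t ht j) m
              have := mul_le_mul_of_nonneg_right hpow (sq_nonneg (U t j))
              nlinarith [abs_nonneg b]
          _ = |b| * γ ^ m * U t j ^ 2 := by ring
      linarith
    have h3 : (∑ j, 2 * (|b| * γ ^ m * U t j ^ 2)) = 2 * (|b| * γ ^ m) * f t := by
      rw [hf, Finset.mul_sum]
      exact Finset.sum_congr rfl fun j _ => by ring
    rw [hsplit, hc]
    rw [h3] at h2
    have : 2 * (lam1 + |b| * γ ^ (M - 1)) * f t = 2 * lam1 * f t + 2 * (|b| * γ ^ m) * f t := by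
      rw [← hm]; ring
    linarith
  -- Gronwall via antitone of g
  set g : ℝ → ℝ := fun t => Real.exp (-(2 * c) * t) * f t with hg
  have hg' : ∀ t : ℝ, 0 ≤ t → HasDerivAt g
      (Real.exp (-(2 * c) * t) * (-(2 * c)) * f t + Real.exp (-(2 * c) * t) * F t) t := by
    intro t ht
    have he : HasDerivAt (fun s => Real.exp (-(2 * c) * s))
        (Real.exp (-(2 * c) * t) * (-(2 * c))) t := by
      simpa using (((hasDerivAt_id t).const_mul (-(2 * c))).exp)
    exact he.mul (hf' t ht)
  have hanti : AntitoneOn g (Set.Ici (0 : ℝ)) := by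
    apply antitoneOn_of_deriv_nonpos (convex_Ici 0)
    · intro x hx
      exact (hg' x hx).continuousAt.continuousWithinAt
    · intro x hx
      rw [interior_Ici] at hx
      exact (hg' x hx.le).differentiableAt.differentiableWithinAt
    · intro x hx
      rw [interior_Ici] at hx
      rw [(hg' x hx.le).deriv]
      have h1 := hkey x hx.le
      have h2 := Real.exp_pos (-(2 * c) * x)
      nlinarith
  intro t ht
  have hmono := hanti (Set.self_mem_Ici) (Set.mem_Ici.mpr ht) ht
  have hg0 : g 0 = f 0 := by simp [hg]
  have hft : f t ≤ Real.exp (2 * c * t) * f 0 := by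
    have h1 : Real.exp (-(2 * c) * t) * f t ≤ f 0 := by rw [← hg0]; exact hmono
    have h2 := mul_le_mul_of_nonneg_left h1 (Real.exp_nonneg (2 * c * t))
    calc f t = Real.exp (2 * c * t) * (Real.exp (-(2 * c) * t) * f t) := by
          rw [← mul_assoc, ← Real.exp_add]; ring_nf; simp
      _ ≤ Real.exp (2 * c * t) * f 0 := h2
  have := Real.sqrt_le_sqrt hft
  calc Real.sqrt (∑ j, U t j ^ 2) ≤ Real.sqrt (Real.exp (2 * c * t) * f 0) := this
    _ = Real.exp (c * t) * Real.sqrt (∑ j, U 0 j ^ 2) := by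
        rw [Real.sqrt_mul (Real.exp_nonneg _)]
        congr 1
        rw [show 2 * c * t = c * t + c * t from by ring, Real.exp_add]
        exact Real.sqrt_mul_self (Real.exp_nonneg _)
end

section
/- Let $A \in \mathbb{R}^{N\times N}$ satisfy $\|I + Ah\|_2 \leq 1$ for some $h > 0$. Define the block bidiagonal matrix $L = \sum_{k=0}^{m}|k\rangle\langle k| \otimes I - \sum_{k=1}^{m}|k\rangle\langle k-1| \otimes (I + Ah)$ of size $(m+1)N \times (m+1)N$. Then the condition number of $L$ satisfies $\kappa(L) = \|L\|_2\,\|L^{-1}\|_2 \leq 2(m+1)$. -/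
open scoped Matrix.Norms.L2Operator Kronecker

open Matrix Finset

section AuxNorm
variable {n p : Type*} [Fintype n] [Fintype p] [DecidableEq p]

lemma stmt11_euc_norm_sq (y : EuclideanSpace ℝ n) : ‖y‖ ^ 2 = ∑ i, (y i) ^ 2 := by
  rw [EuclideanSpace.norm_eq, Real.sq_sqrt (by positivity)]
  simp [sq_abs]

lemma stmt11_opNorm_le_of_sq (M : Matrix n p ℝ) {c : ℝ} (hc : 0 ≤ c)
    (H : ∀ x : p → ℝ, ∑ i, (M.mulVec x i) ^ 2 ≤ c ^ 2 * ∑ j, (x j) ^ 2) :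
    ‖M‖ ≤ c := by
  rw [Matrix.l2_opNorm_def]
  refine ContinuousLinearMap.opNorm_le_bound _ hc fun x => ?_
  have h1 : ((Matrix.toEuclideanLin.trans LinearMap.toContinuousLinearMap) M) x
      = (WithLp.equiv 2 (n → ℝ)).symm (M *ᵥ (WithLp.equiv 2 (p → ℝ)) x) := rfl
  have h2 : ‖((Matrix.toEuclideanLin.trans LinearMap.toContinuousLinearMap) M) x‖ ^ 2
      ≤ (c * ‖x‖) ^ 2 := by
    rw [h1, stmt11_euc_norm_sq, mul_pow, stmt11_euc_norm_sq]
    exact H _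
  exact (pow_le_pow_iff_left₀ (norm_nonneg _) (mul_nonneg hc (norm_nonneg _)) two_ne_zero).mp h2

lemma stmt11_mulVec_sq_le (B : Matrix n p ℝ) (v : p → ℝ) :
    ∑ b, (B *ᵥ v) b ^ 2 ≤ ‖B‖ ^ 2 * ∑ a, (v a) ^ 2 := by
  have h := Matrix.l2_opNorm_mulVec B ((WithLp.equiv 2 (p → ℝ)).symm v)
  have h2 := pow_le_pow_left₀ (norm_nonneg _) h 2
  rw [mul_pow, stmt11_euc_norm_sq, stmt11_euc_norm_sq] at h2
  simpa using h2

lemma stmt11_norm_one_le {q : Type*} [Fintype q] [DecidableEq q] :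
    ‖(1 : Matrix q q ℝ)‖ ≤ 1 := by
  refine stmt11_opNorm_le_of_sq _ zero_le_one fun x => ?_
  simp [Matrix.one_mulVec]

end AuxNorm

/-- The subdiagonal shift matrix. -/
noncomputable def stmt11Sh (m : ℕ) : Matrix (Fin (m+1)) (Fin (m+1)) ℝ :=
  ∑ k : Fin m, Matrix.single k.succ k.castSucc 1

lemma stmt11Sh_zero {m : ℕ} (j : Fin (m+1)) : stmt11Sh m 0 j = 0 := by
  simp only [stmt11Sh, Matrix.sum_apply, Matrix.single, Matrix.of_apply]
  refine Finset.sum_eq_zero fun k _ => ?_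
  simp only [ite_eq_right_iff, and_imp]
  exact fun h => absurd h (Fin.succ_ne_zero k)

lemma stmt11Sh_succ {m : ℕ} (k : Fin m) (j : Fin (m+1)) :
    stmt11Sh m k.succ j = if j = k.castSucc then 1 else 0 := by
  simp only [stmt11Sh, Matrix.sum_apply, Matrix.single, Matrix.of_apply]
  rw [Finset.sum_eq_single k]
  · simp [eq_comm]
  · intro k' _ hk'
    simp only [ite_eq_right_iff, and_imp]
    exact fun h => absurd (Fin.succ_injective _ h) hk'
  · simp

lemma stmt11Sh_pow_zero {m : ℕ} : ∀ (j : ℕ) (i q : Fin (m+1)), (i : ℕ) < (q : ℕ) + j →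
    (stmt11Sh m ^ j) i q = 0 := by
  intro j
  induction j with
  | zero =>
    intro i q hi
    rw [pow_zero]
    exact Matrix.one_apply_ne (by intro h; subst h; simp at hi)
  | succ j ih =>
    intro i q hi
    rw [pow_succ', Matrix.mul_apply]
    refine Finset.sum_eq_zero fun l _ => ?_
    induction i using Fin.cases with
    | zero => rw [stmt11Sh_zero, zero_mul]
    | succ k =>
      rw [stmt11Sh_succ]
      by_cases hl : l = k.castSucc
      · subst hl
        rw [if_pos rfl, one_mul]
        refine ih _ _ ?_
        have h1 : (k.succ : ℕ) = (k : ℕ) + 1 := Fin.val_succ k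
        have h2 : ((k.castSucc : Fin (m+1)) : ℕ) = (k : ℕ) := Fin.coe_castSucc k
        omega
      · rw [if_neg hl, zero_mul]

lemma stmt11Sh_pow_top {m : ℕ} : stmt11Sh m ^ (m + 1) = 0 := by
  ext i q
  rw [stmt11Sh_pow_zero (m+1) i q (by omega)]
  rfl

section Kron
variable {N m : ℕ} (B : Matrix (Fin N) (Fin N) ℝ)

lemma stmt11_S_mulVec_zero (x : Fin (m+1) × Fin N → ℝ) (b : Fin N) :
    ((stmt11Sh m ⊗ₖ B) *ᵥ x) (0, b) = 0 := by
  simp only [Matrix.mulVec, dotProduct]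
  rw [Fintype.sum_prod_type]
  refine Finset.sum_eq_zero fun j _ => Finset.sum_eq_zero fun a _ => ?_
  rw [Matrix.kroneckerMap_apply, stmt11Sh_zero, zero_mul, zero_mul]

lemma stmt11_S_mulVec_succ (x : Fin (m+1) × Fin N → ℝ) (k : Fin m) (b : Fin N) :
    ((stmt11Sh m ⊗ₖ B) *ᵥ x) (k.succ, b) = (B *ᵥ fun a => x (k.castSucc, a)) b := by
  simp only [Matrix.mulVec, dotProduct]
  rw [Fintype.sum_prod_type, Finset.sum_eq_single k.castSucc]
  · simp [Matrix.kroneckerMap_apply, stmt11Sh_succ]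
  · intro j _ hj
    refine Finset.sum_eq_zero fun a _ => ?_
    rw [Matrix.kroneckerMap_apply, stmt11Sh_succ, if_neg hj, zero_mul, zero_mul]
  · simp

lemma stmt11_S_norm_le (hB : ‖B‖ ≤ 1) : ‖stmt11Sh m ⊗ₖ B‖ ≤ 1 := by
  refine stmt11_opNorm_le_of_sq _ zero_le_one fun x => ?_
  rw [one_pow, one_mul]
  have hB2 : ‖B‖ ^ 2 ≤ 1 := by nlinarith [norm_nonneg B]
  calc ∑ q : Fin (m+1) × Fin N, ((stmt11Sh m ⊗ₖ B) *ᵥ x) q ^ 2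
      = ∑ i : Fin (m+1), ∑ b, ((stmt11Sh m ⊗ₖ B) *ᵥ x) (i, b) ^ 2 :=
        Fintype.sum_prod_type _
    _ = ∑ k : Fin m, ∑ b, ((B *ᵥ fun a => x (k.castSucc, a)) b) ^ 2 := by
        rw [Fin.sum_univ_succ]
        simp [stmt11_S_mulVec_zero, stmt11_S_mulVec_succ]
    _ ≤ ∑ k : Fin m, ∑ a, (x (k.castSucc, a)) ^ 2 := by
        refine Finset.sum_le_sum fun k _ => ?_
        refine (stmt11_mulVec_sq_le B _).trans ?_
        have hnn : (0:ℝ) ≤ ∑ a, (x (k.castSucc, a)) ^ 2 := by positivity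
        nlinarith
    _ ≤ ∑ j : Fin (m+1), ∑ a, (x (j, a)) ^ 2 := by
        rw [Fin.sum_univ_castSucc]
        have hnn : (0:ℝ) ≤ ∑ a, (x (Fin.last m, a)) ^ 2 := by positivity
        linarith
    _ = ∑ q : Fin (m+1) × Fin N, x q ^ 2 := by rw [Fintype.sum_prod_type]

lemma stmt11_kron_pow (j : ℕ) : (stmt11Sh m ⊗ₖ B) ^ j = (stmt11Sh m ^ j) ⊗ₖ (B ^ j) := by
  induction j with
  | zero => simp [Matrix.one_kronecker_one]
  | succ j ih => rw [pow_succ, pow_succ, pow_succ, ih, Matrix.mul_kronecker_mul]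

lemma stmt11_sum_kron {ι : Type*} (s : Finset ι) (f : ι → Matrix (Fin (m+1)) (Fin (m+1)) ℝ) :
    (∑ k ∈ s, f k) ⊗ₖ B = ∑ k ∈ s, (f k ⊗ₖ B) := by
  ext ⟨i, b⟩ ⟨j, a⟩
  simp [Matrix.kroneckerMap_apply, Matrix.sum_apply, Finset.sum_mul]

lemma stmt11_sum_diag_one :
    (∑ k : Fin (m+1), Matrix.single k k (1:ℝ)) = 1 := by
  ext i j
  simp only [Matrix.sum_apply, Matrix.single, Matrix.of_apply, Matrix.one_apply]
  by_cases hij : i = j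
  · subst hij; rw [Finset.sum_eq_single i] <;> simp +contextual [eq_comm]
  · rw [if_neg hij]
    refine Finset.sum_eq_zero fun k _ => ?_
    simp only [ite_eq_right_iff, and_imp]
    intro h1 h2; exact absurd (h1.symm.trans h2) hij

end Kron

/-- Condition number bound for the forward-Euler linear system: if `‖I + Ah‖₂ ≤ 1`,
then the block bidiagonal matrix
`L = ∑_{k=0}^m |k⟩⟨k| ⊗ I − ∑_{k=1}^m |k⟩⟨k−1| ⊗ (I + Ah)`
satisfies `κ(L) = ‖L‖₂ ‖L⁻¹‖₂ ≤ 2(m+1)`. -/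
theorem stmt_11 (N m : ℕ) (A : Matrix (Fin N) (Fin N) ℝ) (h : ℝ) (hh : 0 < h)
    (hstab : ‖(1 : Matrix (Fin N) (Fin N) ℝ) + h • A‖ ≤ 1) :
    ‖(∑ k : Fin (m + 1),
          Matrix.single k k (1 : ℝ) ⊗ₖ (1 : Matrix (Fin N) (Fin N) ℝ)) -
        ∑ k : Fin m,
          Matrix.single k.succ k.castSucc (1 : ℝ) ⊗ₖ
            ((1 : Matrix (Fin N) (Fin N) ℝ) + h • A)‖ *
      ‖((∑ k : Fin (m + 1),
          Matrix.single k k (1 : ℝ) ⊗ₖ (1 : Matrix (Fin N) (Fin N) ℝ)) -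
        ∑ k : Fin m,
          Matrix.single k.succ k.castSucc (1 : ℝ) ⊗ₖ
            ((1 : Matrix (Fin N) (Fin N) ℝ) + h • A))⁻¹‖ ≤
      2 * (m + 1) := by
  set B : Matrix (Fin N) (Fin N) ℝ := (1 : Matrix (Fin N) (Fin N) ℝ) + h • A with hB
  have hsum1 : (∑ k : Fin (m + 1),
      Matrix.single k k (1 : ℝ) ⊗ₖ (1 : Matrix (Fin N) (Fin N) ℝ)) = 1 := by
    rw [← stmt11_sum_kron, stmt11_sum_diag_one, Matrix.one_kronecker_one]
  have hsum2 : (∑ k : Fin m,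
      Matrix.single k.succ k.castSucc (1 : ℝ) ⊗ₖ B) = stmt11Sh m ⊗ₖ B := by
    rw [← stmt11_sum_kron]; rfl
  rw [hsum1, hsum2]
  set S : Matrix (Fin (m+1) × Fin N) (Fin (m+1) × Fin N) ℝ := stmt11Sh m ⊗ₖ B with hS
  have hSnorm : ‖S‖ ≤ 1 := stmt11_S_norm_le B hstab
  have hSpow : S ^ (m + 1) = 0 := by
    rw [hS, stmt11_kron_pow, stmt11Sh_pow_top, Matrix.zero_kronecker]
  have hinv : (1 - S)⁻¹ = ∑ j ∈ Finset.range (m+1), S ^ j := by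
    refine Matrix.inv_eq_right_inv ?_
    rw [mul_neg_geom_sum, hSpow, sub_zero]
  have hpow : ∀ j : ℕ, ‖S ^ j‖ ≤ 1 := by
    intro j
    induction j with
    | zero => rw [pow_zero]; exact stmt11_norm_one_le
    | succ j ih =>
      rw [pow_succ]
      calc ‖S ^ j * S‖ ≤ ‖S ^ j‖ * ‖S‖ := norm_mul_le _ _
        _ ≤ 1 * 1 := mul_le_mul ih hSnorm (norm_nonneg _) zero_le_one
        _ = 1 := one_mul 1
  have hL : ‖(1 : Matrix (Fin (m+1) × Fin N) (Fin (m+1) × Fin N) ℝ) - S‖ ≤ 2 := by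
    calc ‖(1 : Matrix (Fin (m+1) × Fin N) (Fin (m+1) × Fin N) ℝ) - S‖
        ≤ ‖(1 : Matrix (Fin (m+1) × Fin N) (Fin (m+1) × Fin N) ℝ)‖ + ‖S‖ := norm_sub_le _ _
      _ ≤ 1 + 1 := add_le_add stmt11_norm_one_le hSnorm
      _ = 2 := by norm_num
  have hLinv : ‖((1 : Matrix (Fin (m+1) × Fin N) (Fin (m+1) × Fin N) ℝ) - S)⁻¹‖ ≤ (m+1 : ℝ) := by
    rw [hinv]
    calc ‖∑ j ∈ Finset.range (m+1), S ^ j‖ ≤ ∑ j ∈ Finset.range (m+1), ‖S ^ j‖ :=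
          norm_sum_le _ _
      _ ≤ ∑ _j ∈ Finset.range (m+1), (1:ℝ) := Finset.sum_le_sum fun j _ => hpow j
      _ = (m+1 : ℝ) := by simp
  calc ‖(1 : Matrix (Fin (m+1) × Fin N) (Fin (m+1) × Fin N) ℝ) - S‖ *
        ‖((1 : Matrix (Fin (m+1) × Fin N) (Fin (m+1) × Fin N) ℝ) - S)⁻¹‖
      ≤ 2 * (m+1 : ℝ) := mul_le_mul hL hLinv (norm_nonneg _) (by norm_num)
    _ = 2 * ((m : ℝ) + 1) := by norm_num
end
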